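/- Let G be a topological group acting continuously on topological spaces X and Y, and let k ≥ 1 be an integer. If X and Y are G-homotopy equivalent — that is, there exist continuous G-equivariant maps f : X → Y and g : Y → X such that g ∘ f is G-homotopic to the identity of X and f ∘ g is G-homotopic to the identity of Y — then TC^{G,k}(X) = TC^{G,k}(Y). -/

import Mathlib

open Set

/-- The space of `k`-tuples of paths in `X` that are consecutive up to the `G`-action:
the `(i+1)`-st path starts in the `G`-orbit of the endpoint of the `i`-th path. -/
def effPk (G X : Type*) [Group G] [TopologicalSpace X] [MulAction G X] (k : ℕ) :
    Set (Fin k → C(unitInterval, X)) :=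
  {γ | ∀ (i : ℕ) (h : i + 1 < k),
    γ ⟨i + 1, h⟩ 0 ∈ MulAction.orbit G (γ ⟨i, Nat.lt_of_succ_lt h⟩ 1)}

/-- A `(G,k)`-motion planner on `U ⊆ X × X`: a continuous section over `U` of the map
`π_k` sending a `k`-tuple of consecutive-up-to-`G` paths to its (start, end) pair. -/
def IsEffPlanner (G X : Type*) [Group G] [TopologicalSpace X] [MulAction G X]
    (k : ℕ) (hk : 0 < k) (U : Set (X × X)) : Prop :=
  ∃ s : U → (Fin k → C(unitInterval, X)),
    Continuous s ∧ (∀ u, s u ∈ effPk G X k) ∧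
    ∀ u : U, (s u ⟨0, hk⟩) 0 = (u : X × X).1 ∧
      (s u ⟨k - 1, Nat.sub_lt hk Nat.one_pos⟩) 1 = (u : X × X).2

/-- `TC^{G,k}(X)`: the least `ℓ ≥ 1` such that `X × X` admits an open cover by `ℓ` sets,
each admitting a `(G,k)`-motion planner; `∞` if there is no such `ℓ`. -/
noncomputable def effTC (G X : Type*) [Group G] [TopologicalSpace X] [MulAction G X]
    (k : ℕ) (hk : 0 < k) : ℕ∞ :=
  sInf {ℓ : ℕ∞ | ∃ n : ℕ, ℓ = n ∧ 1 ≤ n ∧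
    ∃ U : Fin n → Set (X × X), (∀ i, IsOpen (U i)) ∧ (⋃ i, U i) = Set.univ ∧
      ∀ i, IsEffPlanner G X k hk (U i)}

/-- Effective topological complexity `TC^{G,∞}(X)`: the minimum of `TC^{G,k}(X)` over `k ≥ 1`. -/
noncomputable def effTCinf (G X : Type*) [Group G] [TopologicalSpace X] [MulAction G X] : ℕ∞ :=
  ⨅ k : ℕ, effTC G X (k + 1) k.succ_pos

/-- Farber's (non-reduced) topological complexity `TC(X)`. -/
noncomputable def farberTC (X : Type*) [TopologicalSpace X] : ℕ∞ :=
  sInf {ℓ : ℕ∞ | ∃ n : ℕ, ℓ = n ∧ 1 ≤ n ∧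
    ∃ U : Fin n → Set (X × X), (∀ i, IsOpen (U i)) ∧ (⋃ i, U i) = Set.univ ∧
      ∀ i, ∃ s : (U i) → C(unitInterval, X), Continuous s ∧
        ∀ u : (U i), (s u) 0 = (u : X × X).1 ∧ (s u) 1 = (u : X × X).2}

/-! The `G`-action enters `TC^{G,k}` only through the gluing condition between consecutive
paths, which an equivariant map preserves. So a planner `s` on `U ⊆ Y × Y` pulls back to
`(f × f)⁻¹ U`: apply `g` to every path of `s (f x, f x')`, then prepend the reversed track of
`x` under the homotopy `g ∘ f ≃ id` to the first path and append the track of `x'` to the last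
one. Hence `TC^{G,k}(X) ≤ TC^{G,k}(Y)`, and the reverse inequality is symmetric. -/

open scoped unitInterval

namespace ContinuousMap

variable {X Z : Type*} [TopologicalSpace X] [TopologicalSpace Z]

noncomputable def pathTrans (α β : C(I, X)) (h : α 1 = β 0) : C(I, X) :=
  ((⟨α, rfl, rfl⟩ : Path (α 0) (α 1)).trans
    ((⟨β, rfl, rfl⟩ : Path (β 0) (β 1)).cast h rfl)).toContinuousMap

@[simp]
lemma pathTrans_zero (α β : C(I, X)) (h : α 1 = β 0) : pathTrans α β h 0 = α 0 :=
  Path.source _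

@[simp]
lemma pathTrans_one (α β : C(I, X)) (h : α 1 = β 0) : pathTrans α β h 1 = β 1 :=
  Path.target _

lemma _root_.Continuous.pathTrans {α β : Z → C(I, X)} (hα : Continuous α)
    (hβ : Continuous β) {h : ∀ z, α z 1 = β z 0} :
    Continuous fun z => pathTrans (α z) (β z) (h z) := by
  apply continuous_of_continuous_uncurry
  have hα' : Continuous ↿fun z => (⟨α z, rfl, rfl⟩ : Path (α z 0) (α z 1)) :=
    (hα.comp continuous_fst).eval continuous_snd
  have hβ' :
      Continuous ↿fun z => (⟨β z, rfl, rfl⟩ : Path (β z 0) (β z 1)).cast (h z) rfl :=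
    (hβ.comp continuous_fst).eval continuous_snd
  exact Path.trans_continuous_family _ hα' _ hβ'

end ContinuousMap

open ContinuousMap

section EffPaths

variable {G X Y V W : Type*} [Group G] [TopologicalSpace X] [TopologicalSpace Y]
  [TopologicalSpace V] [TopologicalSpace W] [MulAction G X] [MulAction G Y] {k : ℕ}

lemma update_pathTrans_left_apply_one {ι : Type*} [DecidableEq ι] {γ : ι → C(I, X)}
    {i : ι} {p : C(I, X)} (h : p 1 = γ i 0) (j : ι) :
    Function.update γ i (pathTrans p (γ i) h) j 1 = γ j 1 := by
  rcases eq_or_ne j i with rfl | hj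
  · simp
  · simp [hj]

lemma update_pathTrans_right_apply_zero {ι : Type*} [DecidableEq ι] {γ : ι → C(I, X)}
    {i : ι} {q : C(I, X)} (h : γ i 1 = q 0) (j : ι) :
    Function.update γ i (pathTrans (γ i) q h) j 0 = γ j 0 := by
  rcases eq_or_ne j i with rfl | hj
  · simp
  · simp [hj]

lemma mem_effPk_of_inner_endpoints {γ δ : Fin k → C(I, X)} (hγ : γ ∈ effPk G X k)
    (h0 : ∀ i : Fin k, (i : ℕ) ≠ 0 → δ i 0 = γ i 0)
    (h1 : ∀ i : Fin k, (i : ℕ) + 1 < k → δ i 1 = γ i 1) :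
    δ ∈ effPk G X k := by
  intro i hi
  rw [h0 _ i.succ_ne_zero, h1 _ hi]
  exact hγ i hi

lemma comp_mem_effPk {γ : Fin k → C(I, Y)} (hγ : γ ∈ effPk G Y k) {g : C(Y, X)}
    (hg : ∀ (a : G) (y : Y), g (a • y) = a • g y) :
    (fun i => g.comp (γ i)) ∈ effPk G X k := by
  intro i hi
  obtain ⟨a, ha⟩ := hγ i hi
  exact ⟨a, by simp only [comp_apply, ← hg, ha]⟩

abbrev lastIndex (hk : 0 < k) : Fin k := ⟨k - 1, Nat.sub_lt hk Nat.one_pos⟩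

variable (G) (hk : 0 < k)

structure IsEffFamily (s : V → Fin k → C(I, X)) (a b : V → X) : Prop where
  continuous : Continuous s
  mem_effPk : ∀ v, s v ∈ effPk G X k
  source : ∀ v, s v ⟨0, hk⟩ 0 = a v
  target : ∀ v, s v (lastIndex hk) 1 = b v

variable {G hk}

lemma isEffPlanner_iff {U : Set (X × X)} :
    IsEffPlanner G X k hk U ↔
      ∃ s : U → Fin k → C(I, X), IsEffFamily G hk s (·.1.1) (·.1.2) :=
  ⟨fun ⟨s, hc, hm, he⟩ => ⟨s, hc, hm, fun u => (he u).1, fun u => (he u).2⟩,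
    fun ⟨s, hs⟩ => ⟨s, hs.1, hs.2, fun u => ⟨hs.3 u, hs.4 u⟩⟩⟩

namespace IsEffFamily

variable {s : V → Fin k → C(I, X)} {a b : V → X}

lemma comp_left (hs : IsEffFamily G hk s a b) {φ : W → V} (hφ : Continuous φ) :
    IsEffFamily G hk (s ∘ φ) (a ∘ φ) (b ∘ φ) :=
  ⟨hs.continuous.comp hφ, fun w => hs.mem_effPk (φ w), fun w => hs.source (φ w),
    fun w => hs.target (φ w)⟩

lemma map {s : V → Fin k → C(I, Y)} {a b : V → Y} (hs : IsEffFamily G hk s a b)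
    {g : C(Y, X)} (hg : ∀ (c : G) (y : Y), g (c • y) = c • g y) :
    IsEffFamily G hk (fun v i => g.comp (s v i)) (g ∘ a) (g ∘ b) where
  continuous := continuous_pi fun i =>
    (continuous_postcomp g).comp ((continuous_apply i).comp hs.continuous)
  mem_effPk v := comp_mem_effPk (hs.mem_effPk v) hg
  source v := congrArg g (hs.source v)
  target v := congrArg g (hs.target v)

lemma prepend (hs : IsEffFamily G hk s a b) {p : V → C(I, X)} (hp : Continuous p)
    {a' : V → X} (hpa' : ∀ v, p v 0 = a' v) (hpa : ∀ v, p v 1 = a v) :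
    ∃ s', IsEffFamily G hk s' a' b := by
  have h v : p v 1 = s v ⟨0, hk⟩ 0 := (hpa v).trans (hs.source v).symm
  refine ⟨fun v => Function.update (s v) ⟨0, hk⟩ (pathTrans (p v) (s v ⟨0, hk⟩) (h v)),
    hs.continuous.update _
      (hp.pathTrans ((continuous_apply (⟨0, hk⟩ : Fin k)).comp hs.continuous)),
    fun v => mem_effPk_of_inner_endpoints (hs.mem_effPk v) (fun i hi => ?_)
      fun i _ => update_pathTrans_left_apply_one _ i,
    fun v => by simp [hpa'], fun v => (update_pathTrans_left_apply_one _ _).trans (hs.target v)⟩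
  rw [Function.update_of_ne (Fin.ne_of_val_ne hi)]

lemma append (hs : IsEffFamily G hk s a b) {q : V → C(I, X)} (hq : Continuous q)
    {b' : V → X} (hqb : ∀ v, q v 0 = b v) (hqb' : ∀ v, q v 1 = b' v) :
    ∃ s', IsEffFamily G hk s' a b' := by
  have h v : s v (lastIndex hk) 1 = q v 0 := (hs.target v).trans (hqb v).symm
  refine ⟨fun v => Function.update (s v) (lastIndex hk)
      (pathTrans (s v (lastIndex hk)) (q v) (h v)),
    hs.continuous.update _ (((continuous_apply (lastIndex hk)).comp hs.continuous).pathTrans hq),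
    fun v => mem_effPk_of_inner_endpoints (hs.mem_effPk v)
      (fun i _ => update_pathTrans_right_apply_zero _ i) fun i hi => ?_,
    fun v => (update_pathTrans_right_apply_zero _ _).trans (hs.source v), fun v => by simp [hqb']⟩
  rw [Function.update_of_ne (Fin.ne_of_val_ne (by dsimp only; omega))]

end IsEffFamily

end EffPaths

section Pullback

variable {G X Y : Type*} [Group G] [TopologicalSpace X] [TopologicalSpace Y] [MulAction G X]
  [MulAction G Y]

lemma ContinuousMap.Homotopy.continuous_evalAt {f₀ f₁ : C(X, Y)} (F : f₀.Homotopy f₁) :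
    Continuous fun x => (F.evalAt x : C(I, Y)) :=
  continuous_of_continuous_uncurry _ (F.continuous.comp continuous_swap)

lemma ContinuousMap.Homotopy.continuous_evalAt_symm {f₀ f₁ : C(X, Y)} (F : f₀.Homotopy f₁) :
    Continuous fun x => ((F.evalAt x).symm : C(I, Y)) :=
  continuous_of_continuous_uncurry _
    (F.continuous.comp ((unitInterval.continuous_symm.comp continuous_snd).prodMk continuous_fst))

lemma IsEffPlanner.preimage {k : ℕ} {hk : 0 < k} {f : C(X, Y)} {g : C(Y, X)}
    (hg : ∀ (a : G) (y : Y), g (a • y) = a • g y) (F : (g.comp f).Homotopy (.id X))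
    {U : Set (Y × Y)} (hU : IsEffPlanner G Y k hk U) :
    IsEffPlanner G X k hk (Prod.map f f ⁻¹' U) := by
  obtain ⟨s, hs⟩ := isEffPlanner_iff.1 hU
  have hφ : Continuous fun v : Prod.map f f ⁻¹' U => (⟨Prod.map f f v, v.2⟩ : U) := by
    fun_prop
  obtain ⟨s₁, hs₁⟩ := ((hs.comp_left hφ).map hg).prepend
    (F.continuous_evalAt_symm.comp (continuous_fst.comp continuous_subtype_val))
    (fun v => (F.evalAt _).symm.source) (fun v => (F.evalAt _).symm.target)
  obtain ⟨s₂, hs₂⟩ := hs₁.append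
    (F.continuous_evalAt.comp (continuous_snd.comp continuous_subtype_val))
    (fun v => (F.evalAt _).source) (fun v => (F.evalAt _).target)
  exact isEffPlanner_iff.2 ⟨s₂, hs₂⟩

lemma effTC_le_of_homotopy_leftInverse {k : ℕ} (hk : 0 < k) {f : C(X, Y)} {g : C(Y, X)}
    (hg : ∀ (a : G) (y : Y), g (a • y) = a • g y) (F : (g.comp f).Homotopy (.id X)) :
    effTC G X k hk ≤ effTC G Y k hk := by
  refine sInf_le_sInf ?_
  rintro ℓ ⟨n, rfl, hn, U, hopen, hcover, hplan⟩
  refine ⟨n, rfl, hn, fun i => Prod.map f f ⁻¹' U i, fun i => (hopen i).preimage (by fun_prop),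
    ?_, fun i => (hplan i).preimage hg F⟩
  rw [← Set.preimage_iUnion, hcover, Set.preimage_univ]

end Pullback

theorem effTC_eq_of_G_homotopy_equiv_general {G : Type*} [Group G]
    {X Y : Type*} [TopologicalSpace X] [TopologicalSpace Y]
    [MulAction G X] [MulAction G Y]
    (f : C(X, Y)) (g : C(Y, X))
    (hf : ∀ (a : G) (x : X), f (a • x) = a • f x)
    (hg : ∀ (a : G) (y : Y), g (a • y) = a • g y)
    (F : ContinuousMap.Homotopy (g.comp f) (ContinuousMap.id X))
    (K : ContinuousMap.Homotopy (f.comp g) (ContinuousMap.id Y))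
    (k : ℕ) (hk : 1 ≤ k) :
    effTC G X k hk = effTC G Y k hk :=
  le_antisymm (effTC_le_of_homotopy_leftInverse hk hg F)
    (effTC_le_of_homotopy_leftInverse hk hf K)

/-- If `X` and `Y` are `G`-homotopy equivalent — i.e. there are continuous
`G`-equivariant maps `f : X → Y` and `g : Y → X` together with `G`-homotopies from `g ∘ f` to
`id_X` and from `f ∘ g` to `id_Y` — then `TC^{G,k}(X) = TC^{G,k}(Y)` for every `k ≥ 1`. -/
theorem effTC_eq_of_G_homotopy_equiv {G : Type*} [Group G] [TopologicalSpace G]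
    [IsTopologicalGroup G] {X Y : Type*} [TopologicalSpace X] [TopologicalSpace Y]
    [MulAction G X] [MulAction G Y] [ContinuousSMul G X] [ContinuousSMul G Y]
    (f : C(X, Y)) (g : C(Y, X))
    (hf : ∀ (a : G) (x : X), f (a • x) = a • f x)
    (hg : ∀ (a : G) (y : Y), g (a • y) = a • g y)
    (F : ContinuousMap.Homotopy (g.comp f) (ContinuousMap.id X))
    (hF : ∀ (a : G) (x : X) (t : unitInterval), F (t, a • x) = a • F (t, x))
    (K : ContinuousMap.Homotopy (f.comp g) (ContinuousMap.id Y))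
    (hK : ∀ (a : G) (y : Y) (t : unitInterval), K (t, a • y) = a • K (t, y))
    (k : ℕ) (hk : 1 ≤ k) :
    effTC G X k hk = effTC G Y k hk :=
  effTC_eq_of_G_homotopy_equiv_general f g hf hg F K k hk
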